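/- arXiv:1011.3074 — 8 statements merged into one kernel-verified Lean document; each statement's English description precedes it below -/
import Mathlib

section
/- Let φ(ω) = exp(−ω²σ²/2) be the characteristic function of a zero-mean Gaussian with variance σ²>0, and θ>0. Define D(ω) = 2 φ(ω)² (1-cos(ωθ)) / (1-φ(ω)²). Then sup_{ω>0} D(ω) = θ²/σ², and lim_{ω→0⁺} D(ω) = θ²/σ². -/
/-!
Since `φ(ω)² = exp (-ω²σ²)`, `D(ω) = 2 (1 - cos ωθ) / (exp (ω²σ²) - 1)`. Writing
`2 (1 - cos t) = t² sinc (t/2)²` and `exp u - 1 = u E(u)` with `E = dslope exp 0` gives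
`D(ω) = θ²/σ² · sinc (ωθ/2)² / E(ω²σ²)` for `ω ≠ 0`. The last factor is at most `1`,
because `|sinc| ≤ 1` and `E ≥ 1` on `[0, ∞)` (from `u + 1 ≤ exp u`), and by continuity it
tends to `sinc 0 ² / E(0) = 1` as `ω → 0`.
-/

open Real Set Filter Topology

theorem isLUB_image_of_forall_le_of_tendsto {α β : Type*} [TopologicalSpace α] [LinearOrder β]
    [TopologicalSpace β] [OrderTopology β] {f : α → β} {s : Set α} {a : α} {b : β}
    [(𝓝[s] a).NeBot] (hle : ∀ x ∈ s, f x ≤ b) (hf : Tendsto f (𝓝[s] a) (𝓝 b)) :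
    IsLUB (f '' s) b :=
  isLUB_of_mem_closure (forall_mem_image.2 hle)
    (mem_closure_of_tendsto hf (eventually_mem_nhdsWithin.mono fun _ hx ↦ mem_image_of_mem f hx))

namespace Real

lemma exp_neg_half_sq (u : ℝ) : exp (-u / 2) ^ 2 = exp (-u) := by
  rw [sq, ← exp_add, add_halves]

lemma exp_neg_div_one_sub_exp_neg (u : ℝ) : exp (-u) / (1 - exp (-u)) = (exp u - 1)⁻¹ := by
  have h := (exp_pos u).ne'
  rw [exp_neg, ← one_div, one_sub_div h, div_div_div_cancel_right₀ h, one_div]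

lemma two_mul_one_sub_cos (t : ℝ) : 2 * (1 - cos t) = t ^ 2 * sinc (t / 2) ^ 2 := by
  rcases eq_or_ne t 0 with rfl | ht
  · simp
  rw [sinc_of_ne_zero (by positivity), div_pow, sin_sq_eq_half_sub, mul_div_cancel₀ _ two_ne_zero]
  field_simp

lemma exp_sub_one_eq_mul_dslope (u : ℝ) : exp u - 1 = u * dslope exp 0 u := by
  simpa using (sub_smul_dslope exp 0 u).symm

lemma dslope_exp_zero_zero : dslope exp 0 0 = 1 := by
  simp [dslope_same]

lemma one_le_dslope_exp_zero {u : ℝ} (hu : 0 ≤ u) : 1 ≤ dslope exp 0 u := by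
  rcases hu.eq_or_lt with rfl | hu
  · rw [dslope_exp_zero_zero]
  rw [dslope_of_ne _ hu.ne', slope_def_field, exp_zero, sub_zero, le_div_iff₀ hu]
  linarith [add_one_le_exp u]

lemma sinc_sq_div_dslope_exp_le_one (x : ℝ) {u : ℝ} (hu : 0 ≤ u) :
    sinc x ^ 2 / dslope exp 0 u ≤ 1 :=
  div_le_one_of_le₀ (((sq_le_one_iff_abs_le_one _).2 (abs_sinc_le_one x)).trans
    (one_le_dslope_exp_zero hu)) (zero_le_one.trans (one_le_dslope_exp_zero hu))

end Real

section

variable (σ θ : ℝ)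

lemma two_mul_one_sub_cos_div_exp_sub_one {ω : ℝ} (hω : ω ≠ 0) :
    2 * (1 - cos (ω * θ)) / (exp (ω ^ 2 * σ ^ 2) - 1)
      = θ ^ 2 / σ ^ 2 * (sinc (ω * θ / 2) ^ 2 / dslope exp 0 (ω ^ 2 * σ ^ 2)) := by
  rw [two_mul_one_sub_cos, exp_sub_one_eq_mul_dslope, mul_pow, mul_assoc, mul_assoc,
    mul_div_mul_left _ _ (by positivity), mul_div_mul_comm]

lemma tendsto_sinc_sq_div_dslope_exp :
    Tendsto (fun ω ↦ sinc (ω * θ / 2) ^ 2 / dslope exp 0 (ω ^ 2 * σ ^ 2)) (𝓝 0) (𝓝 1) := by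
  have hE : ContinuousAt (dslope exp 0) 0 := continuousAt_dslope_same.2 differentiableAt_exp
  have h : ContinuousAt (fun ω ↦ sinc (ω * θ / 2) ^ 2 / dslope exp 0 (ω ^ 2 * σ ^ 2)) 0 :=
    (by fun_prop : ContinuousAt (fun ω ↦ sinc (ω * θ / 2) ^ 2) 0).div
      (hE.comp_of_eq (by fun_prop) (by simp)) (by simp)
  simpa [dslope_exp_zero_zero] using h.tendsto

end

theorem stmt2_general (σ θ : ℝ)
    (φ : ℝ → ℝ) (hφ : ∀ ω, φ ω = Real.exp (-(ω^2 * σ^2) / 2))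
    (D : ℝ → ℝ)
    (hD : ∀ ω, D ω = 2 * (φ ω)^2 * (1 - Real.cos (ω * θ)) / (1 - (φ ω)^2)) :
    IsLUB (D '' Ioi 0) (θ^2 / σ^2) ∧
      Filter.Tendsto D (nhdsWithin 0 (Ioi 0)) (nhds (θ^2 / σ^2)) := by
  have hD' : ∀ ω ≠ 0,
      D ω = θ ^ 2 / σ ^ 2 * (sinc (ω * θ / 2) ^ 2 / dslope exp 0 (ω ^ 2 * σ ^ 2)) := by
    intro ω hω
    rw [hD, hφ, exp_neg_half_sq, mul_right_comm, mul_div_assoc, exp_neg_div_one_sub_exp_neg,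
      ← div_eq_mul_inv, two_mul_one_sub_cos_div_exp_sub_one σ θ hω]
  have hlim : Tendsto D (𝓝[>] 0) (𝓝 (θ ^ 2 / σ ^ 2)) := by
    have := ((tendsto_sinc_sq_div_dslope_exp σ θ).mono_left
      (nhdsWithin_le_nhds (s := Ioi 0))).const_mul (θ ^ 2 / σ ^ 2)
    rw [mul_one] at this
    exact this.congr' (eventually_nhdsWithin_of_forall fun ω hω ↦ (hD' ω (hω.ne')).symm)
  refine ⟨isLUB_image_of_forall_le_of_tendsto (fun ω hω ↦ ?_) hlim, hlim⟩
  rw [hD' ω (hω.ne')]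
  exact mul_le_of_le_one_right (by positivity) (sinc_sq_div_dslope_exp_le_one _ (by positivity))

theorem stmt2 (σ θ : ℝ) (hσ : 0 < σ) (hθ : 0 < θ)
    (φ : ℝ → ℝ) (hφ : ∀ ω, φ ω = Real.exp (-(ω^2 * σ^2) / 2))
    (D : ℝ → ℝ)
    (hD : ∀ ω, D ω = 2 * (φ ω)^2 * (1 - Real.cos (ω * θ)) / (1 - (φ ω)^2)) :
    IsLUB (D '' Ioi 0) (θ^2 / σ^2) ∧
      Filter.Tendsto D (nhdsWithin 0 (Ioi 0)) (nhds (θ^2 / σ^2)) :=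
  stmt2_general σ θ φ hφ D hD
end

section
/- For the Gaussian characteristic function φ(ω)=exp(−ω²σ²/2) and any ω>0 and θ>0, it holds that 2 φ(ω)² (1-cos(ωθ)) / (1-φ(ω)²) ≤ θ²/σ². -/
open Real

theorem stmt3 (σ θ ω : ℝ) (hσ : 0 < σ) (hθ : 0 < θ) (hω : 0 < ω)
    (φ : ℝ → ℝ) (hφ : ∀ w, φ w = Real.exp (-(w^2 * σ^2) / 2)) :
    2 * (φ ω)^2 * (1 - Real.cos (ω * θ)) / (1 - (φ ω)^2) ≤ θ^2 / σ^2 := by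
  have ht : 0 < ω^2 * σ^2 := by positivity
  rw [hφ]
  set t := ω^2 * σ^2 with htdef
  have hsq : Real.exp (-t / 2) ^ 2 = Real.exp (-t) := by
    rw [← Real.exp_nat_mul]; ring_nf
  rw [hsq]
  have hlt : Real.exp (-t) < 1 := by
    rw [Real.exp_lt_one_iff]; linarith
  have hden : 0 < 1 - Real.exp (-t) := by linarith
  rw [div_le_div_iff₀ hden (by positivity)]
  -- 2 e^{-t}(1-cos(ωθ)) σ² ≤ θ² (1 - e^{-t})
  have hcos : 1 - Real.cos (ω * θ) ≤ (ω * θ)^2 / 2 := by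
    have := Real.one_sub_sq_div_two_le_cos (x := ω * θ); linarith
  have hexp : t * Real.exp (-t) ≤ 1 - Real.exp (-t) := by
    have h1 : t + 1 ≤ Real.exp t := Real.add_one_le_exp t
    have h2 : Real.exp (-t) * Real.exp t = 1 := by
      rw [← Real.exp_add]; simp
    nlinarith [Real.exp_pos (-t), Real.exp_pos t]
  have key : 2 * Real.exp (-t) * (1 - Real.cos (ω * θ)) * σ^2
      ≤ θ^2 * (1 - Real.exp (-t)) := by
    calc 2 * Real.exp (-t) * (1 - Real.cos (ω * θ)) * σ^2
        ≤ 2 * Real.exp (-t) * ((ω * θ)^2 / 2) * σ^2 := by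
          apply mul_le_mul_of_nonneg_right _ (by positivity)
          exact mul_le_mul_of_nonneg_left hcos (by positivity)
      _ = θ^2 * (t * Real.exp (-t)) := by rw [htdef]; ring
      _ ≤ θ^2 * (1 - Real.exp (-t)) := by
          exact mul_le_mul_of_nonneg_left hexp (by positivity)
  linarith
end

section
/- Let α > 1, γ > 0, θ > 0 and define G(β) = α − exp(−2γβ/θ) − (2γ/θ) α tan(β/2) on (0, π). Then G is strictly concave on (0,π), G(0⁺) = α − 1 > 0, G(β) → −∞ as β → π⁻, and G has a unique zero in (0, π). -/
open Real Set Filter Topology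

/-!
`G` is the sum of the strictly concave `-exp(-2γβ/θ)` and of `-(2γα/θ) tan(β/2)`, which is concave
because `tan` is convex on `[0, π/2)` (its derivative `1/cos²` increases there). `G` is continuous
at `0` with value `α - 1 > 0` and tends to `-∞` at `π` since `tan` does at `π/2`. A strictly concave
function on an interval that is positive near the left end and negative near the right end has
exactly one zero: one by the intermediate value theorem, and no two, since strict concavity would
make it negative to the left of both.
-/

theorem StrictConcaveOn.lt_of_lt_of_apply_eq {s : Set ℝ} {f : ℝ → ℝ} {t x y : ℝ}
    (hf : StrictConcaveOn ℝ s f) (ht : t ∈ s) (hy : y ∈ s) (htx : t < x) (hxy : x < y)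
    (hfxy : f x = f y) : f t < f x := by
  have hslope := hf.slope_anti_adjacent ht hy htx hxy
  rw [hfxy, sub_self, zero_div, lt_div_iff₀ (sub_pos.2 htx)] at hslope
  linarith

theorem StrictConcaveOn.existsUnique_zero {f : ℝ → ℝ} {a b : ℝ} (hab : a < b)
    (hf : StrictConcaveOn ℝ (Ioo a b) f) (ha : ∀ᶠ x in 𝓝[>] a, 0 < f x)
    (hb : ∀ᶠ x in 𝓝[<] b, f x < 0) : ∃! x, x ∈ Ioo a b ∧ f x = 0 := by
  obtain ⟨t, hft, ht⟩ := (ha.and (Ioo_mem_nhdsGT hab)).exists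
  obtain ⟨s, hfs, hs⟩ := (hb.and (Ioo_mem_nhdsLT ht.2)).exists
  have hts : Icc t s ⊆ Ioo a b := Icc_subset_Ioo ht.1 hs.2
  have hcont : ContinuousOn f (Ioo a b) := by
    simpa only [interior_Ioo] using hf.concaveOn.continuousOn_interior
  obtain ⟨x, hx, hfx⟩ := intermediate_value_Icc' hs.1.le (hcont.mono hts) ⟨hfs.le, hft.le⟩
  refine ⟨x, ⟨hts hx, hfx⟩, fun y ⟨hy, hfy⟩ => ?_⟩
  have no_two_zeros : ∀ u v, u ∈ Ioo a b → v ∈ Ioo a b → u < v → f u = 0 → f v = 0 → False := by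
    intro u v hu hv huv hfu hfv
    obtain ⟨r, hfr, hr⟩ := (ha.and (Ioo_mem_nhdsGT hu.1)).exists
    have := hf.lt_of_lt_of_apply_eq ⟨hr.1, hr.2.trans hu.2⟩ hv hr.2 huv (hfu.trans hfv.symm)
    linarith
  rcases lt_trichotomy y x with h | h | h
  · exact (no_two_zeros y x hy (hts hx) h hfy hfx).elim
  · exact h
  · exact (no_two_zeros x y (hts hx) hy h hfx hfy).elim

theorem convexOn_tan : ConvexOn ℝ (Ico 0 (π / 2)) tan := by
  have hsub : Ico 0 (π / 2) ⊆ Ioo (-(π / 2)) (π / 2) := Ico_subset_Ioo_left (by linarith [pi_pos])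
  refine MonotoneOn.convexOn_of_deriv (convex_Ico _ _) (continuousOn_tan_Ioo.mono hsub) ?_ ?_
    <;> rw [interior_Ico]
  · exact fun x hx =>
      (differentiableAt_tan_of_mem_Ioo (hsub (Ioo_subset_Ico_self hx))).differentiableWithinAt
  · intro x hx y hy hxy
    simp only [deriv_tan]
    have hcos : 0 < cos y := cos_pos_of_mem_Ioo (hsub (Ioo_subset_Ico_self hy))
    have := cos_le_cos_of_nonneg_of_le_pi hx.1.le (by linarith [hy.2, pi_pos]) hxy
    gcongr

theorem convexOn_tan_half : ConvexOn ℝ (Ico 0 π) fun x => tan (x / 2) := by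
  refine ⟨convex_Ico 0 π, fun x hx y hy a b ha hb hab => ?_⟩
  have := convexOn_tan.2 (x := x / 2) (y := y / 2) ⟨by linarith [hx.1], by linarith [hx.2]⟩
    ⟨by linarith [hy.1], by linarith [hy.2]⟩ ha hb hab
  simp only [smul_eq_mul] at this ⊢
  rwa [show (a * x + b * y) / 2 = a * (x / 2) + b * (y / 2) by ring]

theorem strictConvexOn_exp_mul {κ : ℝ} (hκ : κ ≠ 0) :
    StrictConvexOn ℝ univ fun x => exp (κ * x) := by
  refine ⟨convex_univ, fun x _ y _ hxy a b ha hb hab => ?_⟩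
  have := strictConvexOn_exp.2 (mem_univ (κ * x)) (mem_univ (κ * y)) (by simpa [hκ] using hxy)
    ha hb hab
  simpa only [smul_eq_mul, mul_add, mul_left_comm κ] using this

noncomputable def phaseFn (A κ B β : ℝ) : ℝ := A - exp (κ * β) - B * tan (β / 2)

theorem strictConcaveOn_phaseFn (A : ℝ) {κ B : ℝ} (hκ : κ ≠ 0) (hB : 0 ≤ B) :
    StrictConcaveOn ℝ (Ioo 0 π) (phaseFn A κ B) := by
  have hexp : StrictConcaveOn ℝ (Ioo 0 π) fun β => -exp (κ * β) :=
    ((strictConvexOn_exp_mul hκ).subset (subset_univ _) (convex_Ioo 0 π)).neg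
  have htan : ConcaveOn ℝ (Ioo 0 π) fun β => -(B * tan (β / 2)) :=
    ((convexOn_tan_half.smul hB).subset Ioo_subset_Ico_self (convex_Ioo 0 π)).neg
  have hsum : phaseFn A κ B =
      ((fun β => -exp (κ * β)) + fun β => -(B * tan (β / 2))) + fun _ => A := by
    funext β
    simp only [phaseFn, Pi.add_apply]
    ring
  rw [hsum]
  exact (hexp.add_concaveOn htan).add_const A

theorem tendsto_phaseFn_nhds_zero (A κ B : ℝ) :
    Tendsto (phaseFn A κ B) (𝓝 0) (𝓝 (A - 1)) := by
  have htan : ContinuousAt tan (0 / 2) := (differentiableAt_tan.2 (by simp)).continuousAt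
  have hcont : ContinuousAt (phaseFn A κ B) 0 := by unfold phaseFn; fun_prop
  simpa [phaseFn] using hcont.tendsto

theorem tendsto_tan_half_nhdsLT_pi : Tendsto (fun x => tan (x / 2)) (𝓝[<] π) atTop :=
  tendsto_tan_pi_div_two.comp <|
    (continuous_id.div_const 2).continuousWithinAt.tendsto_nhdsWithin fun x (hx : x < π) =>
      show x / 2 < π / 2 by linarith

theorem tendsto_phaseFn_nhdsLT_pi (A κ : ℝ) {B : ℝ} (hB : 0 < B) :
    Tendsto (phaseFn A κ B) (𝓝[<] π) atBot := by
  have hcont : Tendsto (fun β => A - exp (κ * β)) (𝓝[<] π) (𝓝 (A - exp (κ * π))) :=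
    (Continuous.tendsto (by fun_prop) π).mono_left nhdsWithin_le_nhds
  refine (hcont.add_atBot (tendsto_neg_atTop_atBot.comp
    (tendsto_tan_half_nhdsLT_pi.const_mul_atTop hB))).congr fun β => ?_
  simp only [phaseFn, Function.comp_apply]
  ring

theorem stmt8 (α γ θ : ℝ) (hα : 1 < α) (hγ : 0 < γ) (hθ : 0 < θ)
    (G : ℝ → ℝ)
    (hG : ∀ β, G β = α - Real.exp (-(2 * γ * β) / θ) - (2 * γ / θ) * α * Real.tan (β / 2)) :
    StrictConcaveOn ℝ (Ioo 0 π) G ∧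
    Filter.Tendsto G (nhdsWithin 0 (Ioi 0)) (nhds (α - 1)) ∧
    0 < α - 1 ∧
    Filter.Tendsto G (nhdsWithin π (Iio π)) Filter.atBot ∧
    ∃! β, β ∈ Ioo 0 π ∧ G β = 0 := by
  obtain rfl : G = phaseFn α (-(2 * γ / θ)) (2 * γ / θ * α) := by
    ext β
    rw [hG, phaseFn, neg_mul, neg_div, mul_div_right_comm]
  have hα' : 0 < α - 1 := sub_pos.2 hα
  have hB : 0 < 2 * γ / θ * α := mul_pos (by positivity) (by linarith)
  have hconc := strictConcaveOn_phaseFn α (neg_ne_zero.2 (by positivity : 2 * γ / θ ≠ 0)) hB.le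
  have h0 := (tendsto_phaseFn_nhds_zero α (-(2 * γ / θ)) (2 * γ / θ * α)).mono_left
    (nhdsWithin_le_nhds (s := Ioi 0))
  have hπ := tendsto_phaseFn_nhdsLT_pi α (-(2 * γ / θ)) hB
  exact ⟨hconc, h0, hα', hπ, hconc.existsUnique_zero pi_pos (h0.eventually (lt_mem_nhds hα'))
    (hπ.eventually (eventually_lt_atBot 0))⟩
end

section
/- Let α > 1, σ > 0, θ > 0 and define G(β) = α − exp(−σ²β²/θ²) − (2ασ²/θ²) β tan(β/2) on (0, π). Then G is strictly decreasing on (0, π), G(0⁺) = α − 1 > 0, G(β) → −∞ as β → π⁻, and G has a unique zero in (0, π). -/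
open Real Set Filter Topology

/-! With `c = σ²/θ²`,
`G β = α - (exp (-cβ²) + cβ²) - 2αc (β tan (β/2) - β²/2) - (α - 1) c β²`.
Both bracketed functions are nondecreasing on `[0, π)`, because `exp (-t) + t` and `tan x - x`
have nonnegative derivatives, while the last term is strictly decreasing. The limit at `π` comes
from `tan (β/2) → ∞`, and the unique zero from the intermediate value theorem. -/

lemma monotoneOn_exp_neg_add_id : MonotoneOn (fun t => exp (-t) + t) (Ici 0) := by
  intro s hs t _ hst
  have hexp : exp (-s) * (s - t + 1) ≤ exp (-t) := by
    calc exp (-s) * (s - t + 1) ≤ exp (-s) * exp (s - t) :=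
          mul_le_mul_of_nonneg_left (add_one_le_exp _) (exp_pos _).le
      _ = exp (-t) := by rw [← exp_add]; ring_nf
  have hle : exp (-s) ≤ 1 := exp_le_one_iff.2 (neg_nonpos.2 hs)
  nlinarith [mul_nonneg (sub_nonneg.2 hle) (sub_nonneg.2 hst)]

lemma monotoneOn_tan_sub_id : MonotoneOn (fun x => tan x - x) (Ioo (-(π / 2)) (π / 2)) := by
  refine monotoneOn_of_deriv_nonneg (f := fun x => tan x - x) (convex_Ioo _ _)
    (continuousOn_tan_Ioo.sub continuousOn_id) ?_ ?_
  · rw [interior_Ioo]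
    exact fun x hx =>
      ((differentiableAt_tan_of_mem_Ioo hx).sub differentiableAt_id).differentiableWithinAt
  · rw [interior_Ioo]
    intro x hx
    have hcos : 0 < cos x := cos_pos_of_mem_Ioo hx
    have hderiv : HasDerivAt (fun x => tan x - x) (1 / cos x ^ 2 - 1) x :=
      (hasDerivAt_tan hcos.ne').sub (hasDerivAt_id' x)
    rw [hderiv.deriv, sub_nonneg, le_div_iff₀ (by positivity), one_mul]
    exact pow_le_one₀ hcos.le (cos_le_one x)

lemma monotoneOn_mul_tan_half_sub_sq_div_two :
    MonotoneOn (fun β => β * tan (β / 2) - β ^ 2 / 2) (Ico 0 π) := by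
  intro a ha b hb hab
  have hhalf : ∀ β ∈ Ico 0 π, β / 2 ∈ Ioo (-(π / 2)) (π / 2) := fun β hβ =>
    ⟨by linarith [hβ.1, pi_pos], by linarith [hβ.2]⟩
  have hmono := monotoneOn_tan_sub_id (hhalf a ha) (hhalf b hb) (by linarith)
  have hnonneg : 0 ≤ tan (a / 2) - a / 2 :=
    sub_nonneg.2 (le_tan (by linarith [ha.1]) (hhalf a ha).2)
  have := mul_le_mul (by linarith : a / 2 ≤ b / 2) hmono hnonneg (by linarith [hb.1])
  dsimp only at this ⊢
  linarith

/-- The function `G` of the statement, with `c = σ² / θ²`. -/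
noncomputable def phaseFunction (α c β : ℝ) : ℝ :=
  α - exp (-(c * β ^ 2)) - 2 * α * c * β * tan (β / 2)

section phaseFunction

variable {α c : ℝ}

lemma phaseFunction_strictAntiOn (hα : 1 < α) (hc : 0 < c) :
    StrictAntiOn (phaseFunction α c) (Ico 0 π) := by
  intro a ha b hb hab
  have hsq : c * a ^ 2 < c * b ^ 2 := by gcongr; exact ha.1
  have hexp := monotoneOn_exp_neg_add_id (by positivity : 0 ≤ c * a ^ 2)
    (by positivity : 0 ≤ c * b ^ 2) hsq.le
  have htan := mul_le_mul_of_nonneg_left (monotoneOn_mul_tan_half_sub_sq_div_two ha hb hab.le)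
    (by positivity : 0 ≤ 2 * α * c)
  have hgap := mul_lt_mul_of_pos_left hsq (sub_pos.2 hα)
  dsimp only at hexp htan
  unfold phaseFunction
  linarith

lemma continuousAt_phaseFunction {β : ℝ} (hβ : β ∈ Ioo (-π) π) :
    ContinuousAt (phaseFunction α c) β := by
  have hcos : cos (β / 2) ≠ 0 :=
    (cos_pos_of_mem_Ioo ⟨by linarith [hβ.1], by linarith [hβ.2]⟩).ne'
  have htan : ContinuousAt (fun β => tan (β / 2)) β :=
    (continuousAt_tan.2 hcos).comp (f := (· / 2)) (continuousAt_id.div_const 2)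
  unfold phaseFunction
  fun_prop

lemma tendsto_phaseFunction_zero : Tendsto (phaseFunction α c) (𝓝 0) (𝓝 (α - 1)) := by
  have hval : phaseFunction α c 0 = α - 1 := by simp [phaseFunction]
  exact hval ▸ (continuousAt_phaseFunction ⟨neg_lt_zero.2 pi_pos, pi_pos⟩).tendsto

lemma tendsto_phaseFunction_nhdsLT_pi (hα : 0 < α) (hc : 0 < c) :
    Tendsto (phaseFunction α c) (𝓝[<] π) atBot := by
  have hhalf : Tendsto (· / 2) (𝓝[<] π) (𝓝[<] (π / 2)) :=
    tendsto_nhdsWithin_of_tendsto_nhds_of_eventually_within _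
      ((continuous_id.div_const 2).tendsto π |>.mono_left nhdsWithin_le_nhds)
      (eventually_nhdsWithin_of_forall fun β (hβ : β < π) => show β / 2 < π / 2 by linarith)
  have hlin : Tendsto (fun β => 2 * α * c * β) (𝓝[<] π) (𝓝 (2 * α * c * π)) :=
    (continuous_const.mul continuous_id).tendsto π |>.mono_left nhdsWithin_le_nhds
  have hprod := hlin.pos_mul_atTop (by positivity) (tendsto_tan_pi_div_two.comp hhalf)
  refine tendsto_atBot_mono (fun β => ?_)
    (tendsto_atBot_add_const_left _ α (tendsto_neg_atTop_atBot.comp hprod))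
  simp only [phaseFunction, Function.comp_apply]
  linarith [exp_pos (-(c * β ^ 2))]

end phaseFunction

lemma existsUnique_zero_of_strictAntiOn {f : ℝ → ℝ} {a b : ℝ} (hab : a < b)
    (hf : StrictAntiOn f (Ioo a b)) (hcont : ContinuousOn f (Ioo a b))
    (hpos : ∀ᶠ x in 𝓝[>] a, 0 < f x) (hneg : ∀ᶠ x in 𝓝[<] b, f x < 0) :
    ∃! x, x ∈ Ioo a b ∧ f x = 0 := by
  obtain ⟨p, hfp, hp⟩ := (hpos.and (Ioo_mem_nhdsGT hab)).exists
  obtain ⟨q, hfq, hq⟩ := (hneg.and (Ioo_mem_nhdsLT hp.2)).exists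
  have hsub : Icc p q ⊆ Ioo a b := Icc_subset_Ioo hp.1 hq.2
  obtain ⟨x, hx, hfx⟩ :=
    intermediate_value_Icc' hq.1.le (hcont.mono hsub) ⟨hfq.le, hfp.le⟩
  exact ⟨x, ⟨hsub hx, hfx⟩, fun y hy => hf.injOn hy.1 (hsub hx) (hy.2.trans hfx.symm)⟩

theorem stmt9 (α σ θ : ℝ) (hα : 1 < α) (hσ : 0 < σ) (hθ : 0 < θ)
    (G : ℝ → ℝ)
    (hG : ∀ β, G β = α - Real.exp (-(σ^2 * β^2) / θ^2) - (2 * α * σ^2 / θ^2) * β * Real.tan (β / 2)) :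
    StrictAntiOn G (Ioo 0 π) ∧
    Filter.Tendsto G (nhdsWithin 0 (Ioi 0)) (nhds (α - 1)) ∧
    0 < α - 1 ∧
    Filter.Tendsto G (nhdsWithin π (Iio π)) Filter.atBot ∧
    ∃! β, β ∈ Ioo 0 π ∧ G β = 0 := by
  have hc : 0 < σ ^ 2 / θ ^ 2 := by positivity
  obtain rfl : G = phaseFunction α (σ ^ 2 / θ ^ 2) :=
    funext fun β => by
      rw [hG, phaseFunction, show -(σ ^ 2 * β ^ 2) / θ ^ 2 = -(σ ^ 2 / θ ^ 2 * β ^ 2) by ring]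
      ring
  generalize σ ^ 2 / θ ^ 2 = c at hc ⊢
  have hα₁ : 0 < α - 1 := sub_pos.2 hα
  have hanti := (phaseFunction_strictAntiOn hα hc).mono Ioo_subset_Ico_self
  have hlim₀ : Tendsto (phaseFunction α c) (𝓝[>] 0) (𝓝 (α - 1)) :=
    tendsto_phaseFunction_zero.mono_left nhdsWithin_le_nhds
  have hlimπ := tendsto_phaseFunction_nhdsLT_pi (zero_lt_one.trans hα) hc
  have hcont : ContinuousOn (phaseFunction α c) (Ioo 0 π) := fun β hβ =>
    (continuousAt_phaseFunction ⟨by linarith [hβ.1, pi_pos], hβ.2⟩).continuousWithinAt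
  exact ⟨hanti, hlim₀, hα₁, hlimπ, existsUnique_zero_of_strictAntiOn pi_pos hanti hcont
    (hlim₀.eventually (eventually_gt_nhds hα₁)) (hlimπ.eventually (eventually_lt_atBot 0))⟩
end

section
/- For the Cauchy characteristic function φ(ω) = e^{−γω} (γ > 0) and θ > 0, the function ω ↦ φ(ω)²(1 − cos(ωθ)) = e^{−2γω}(1 − cos(ωθ)) on (0, π/θ) is uniquely maximized at ω* = (2/θ) arctan(θ/(2γ)). -/
/-!
Write `x = ωθ` and `c = 2γ/θ`, so that the objective is `exp (-(c x)) (1 - cos x)` on `(0, π)`.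
Its derivative is `exp (-(c x)) (sin x - c (1 - cos x))`, and the half-angle formulas factor the
second factor as `2 sin (x/2) (cos (x/2) - c sin (x/2))`. On `(0, π)` the first factor is positive
and the second changes sign exactly once, where `tan (x/2) = 1/c`, i.e. at `x = 2 arctan (1/c)`.
-/

open Real Set

namespace Real

lemma sin_lt_mul_cos_iff_lt_arctan {s : ℝ} (t : ℝ) (hs₁ : -(π / 2) < s) (hs₂ : s < π / 2) :
    sin s < t * cos s ↔ s < arctan t := by
  rw [← div_lt_iff₀ (cos_pos_of_mem_Ioo ⟨hs₁, hs₂⟩), ← tan_eq_sin_div_cos,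
    ← arctan_lt_arctan_iff, arctan_tan hs₁ hs₂]

lemma mul_cos_lt_sin_iff_arctan_lt {s : ℝ} (t : ℝ) (hs₁ : -(π / 2) < s) (hs₂ : s < π / 2) :
    t * cos s < sin s ↔ arctan t < s := by
  rw [← lt_div_iff₀ (cos_pos_of_mem_Ioo ⟨hs₁, hs₂⟩), ← tan_eq_sin_div_cos,
    ← arctan_lt_arctan_iff, arctan_tan hs₁ hs₂]

lemma two_mul_arctan_mem_Ioo {t : ℝ} (ht : 0 < t) : 2 * arctan t ∈ Ioo 0 π :=
  ⟨by linarith [arctan_pos.2 ht], by linarith [arctan_lt_pi_div_two t]⟩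

lemma sin_sub_mul_one_sub_cos (c x : ℝ) :
    sin x - c * (1 - cos x) = 2 * sin (x / 2) * (cos (x / 2) - c * sin (x / 2)) := by
  conv_lhs => rw [← mul_div_cancel₀ x (two_ne_zero' ℝ), sin_two_mul, cos_two_mul]
  linear_combination 2 * c * sin_sq_add_cos_sq (x / 2)

end Real

/-- The objective `φ(ω)² (1 - cos (ωθ))` in the variable `x = ωθ`, with `c = 2γ/θ`. -/
noncomputable def cauchyObjective (c x : ℝ) : ℝ := exp (-(c * x)) * (1 - cos x)

namespace cauchyObjective

variable {c : ℝ}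

lemma hasDerivAt (c x : ℝ) :
    HasDerivAt (cauchyObjective c) (exp (-(c * x)) * (sin x - c * (1 - cos x))) x := by
  have hexp : HasDerivAt (fun x => exp (-(c * x))) (exp (-(c * x)) * -c) x := by
    simpa using ((hasDerivAt_id x).const_mul c).neg.exp
  exact (hexp.fun_mul ((hasDerivAt_cos x).const_sub 1)).congr_deriv (by ring)

lemma continuous (c : ℝ) : Continuous (cauchyObjective c) := by
  unfold cauchyObjective
  fun_prop

lemma deriv_pos (hc : 0 < c) {x : ℝ} (hx₀ : 0 < x) (hx : x < 2 * arctan c⁻¹) :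
    0 < deriv (cauchyObjective c) x := by
  have hs₁ : -(π / 2) < x / 2 := by linarith [pi_pos]
  have hs₂ : x / 2 < π / 2 := by linarith [arctan_lt_pi_div_two c⁻¹]
  have hsin : 0 < sin (x / 2) := sin_pos_of_pos_of_lt_pi (by linarith) (by linarith)
  have hbracket : c * sin (x / 2) < cos (x / 2) := by
    rw [← lt_inv_mul_iff₀ hc, sin_lt_mul_cos_iff_lt_arctan _ hs₁ hs₂]
    linarith
  rw [(hasDerivAt c x).deriv, sin_sub_mul_one_sub_cos]
  have := sub_pos.2 hbracket
  positivity

lemma deriv_neg (hc : 0 < c) {x : ℝ} (hx : 2 * arctan c⁻¹ < x) (hxπ : x < π) :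
    deriv (cauchyObjective c) x < 0 := by
  have hx₀ : 0 < x := by linarith [arctan_pos.2 (inv_pos.2 hc)]
  have hs₁ : -(π / 2) < x / 2 := by linarith [pi_pos]
  have hs₂ : x / 2 < π / 2 := by linarith
  have hsin : 0 < sin (x / 2) := sin_pos_of_pos_of_lt_pi (by linarith) (by linarith)
  have hbracket : cos (x / 2) < c * sin (x / 2) := by
    rw [← inv_mul_lt_iff₀ hc, mul_cos_lt_sin_iff_arctan_lt _ hs₁ hs₂]
    linarith
  rw [(hasDerivAt c x).deriv, sin_sub_mul_one_sub_cos]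
  exact mul_neg_of_pos_of_neg (exp_pos _) (mul_neg_of_pos_of_neg (by positivity)
    (sub_neg.2 hbracket))

lemma strictMonoOn (hc : 0 < c) : StrictMonoOn (cauchyObjective c) (Icc 0 (2 * arctan c⁻¹)) :=
  strictMonoOn_of_deriv_pos (convex_Icc _ _) (continuous c).continuousOn fun x hx => by
    rw [interior_Icc] at hx
    exact deriv_pos hc hx.1 hx.2

lemma strictAntiOn (hc : 0 < c) : StrictAntiOn (cauchyObjective c) (Icc (2 * arctan c⁻¹) π) :=
  strictAntiOn_of_deriv_neg (convex_Icc _ _) (continuous c).continuousOn fun x hx => by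
    rw [interior_Icc] at hx
    exact deriv_neg hc hx.1 hx.2

lemma lt_of_ne (hc : 0 < c) {x : ℝ} (hx : x ∈ Icc 0 π) (hne : x ≠ 2 * arctan c⁻¹) :
    cauchyObjective c x < cauchyObjective c (2 * arctan c⁻¹) := by
  have hmem := two_mul_arctan_mem_Ioo (inv_pos.2 hc)
  rcases hne.lt_or_gt with hlt | hgt
  · exact strictMonoOn hc ⟨hx.1, hlt.le⟩ ⟨hmem.1.le, le_rfl⟩ hlt
  · exact strictAntiOn hc ⟨le_rfl, hmem.2.le⟩ ⟨hgt.le, hx.2⟩ hgt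

end cauchyObjective

theorem stmt12 (γ θ : ℝ) (hγ : 0 < γ) (hθ : 0 < θ)
    (f : ℝ → ℝ) (hf : ∀ ω, f ω = Real.exp (-(2 * γ * ω)) * (1 - Real.cos (ω * θ)))
    (ωs : ℝ) (hωs : ωs = (2 / θ) * Real.arctan (θ / (2 * γ))) :
    ωs ∈ Ioo 0 (π / θ) ∧ ∀ ω ∈ Ioo 0 (π / θ), ω ≠ ωs → f ω < f ωs := by
  set c := 2 * γ / θ
  have hc : 0 < c := by positivity
  have hf' : ∀ ω, f ω = cauchyObjective c (ω * θ) := fun ω => by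
    have hcx : 2 * γ / θ * (ω * θ) = 2 * γ * ω := by field_simp
    rw [hf, cauchyObjective, hcx]
  have hωs' : ωs * θ = 2 * arctan c⁻¹ := by
    rw [hωs, inv_div]
    field_simp
  have hmem : ∀ ω, ω ∈ Ioo 0 (π / θ) ↔ ω * θ ∈ Ioo 0 π := fun ω => by
    simp only [mem_Ioo, lt_div_iff₀ hθ, mul_pos_iff_of_pos_right hθ]
  refine ⟨(hmem ωs).2 (hωs' ▸ two_mul_arctan_mem_Ioo (inv_pos.2 hc)), fun ω hω hne => ?_⟩
  rw [hf', hf', hωs']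
  refine cauchyObjective.lt_of_ne hc (Ioo_subset_Icc_self ((hmem ω).1 hω)) ?_
  rw [← hωs']
  exact fun h => hne (mul_right_cancel₀ hθ.ne' h)
end

section
/- For the Cauchy characteristic function φ(ω)=e^{−γω} with γ>0 and per-sensor power constraint, the deflection coefficient D_pspc(ω) = 2 e^{−2γω}(1−cos(ωθ))/(1−e^{−2γω}) satisfies lim_{ω→0⁺} D_pspc(ω) = 0. -/
open Real Set Filter Topology

/-! Since `1 - cos x ≤ x² / 2` and `e^{-x} / (1 - e^{-x}) = 1 / (e^x - 1) ≤ 1 / x` for `x > 0`,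
the deflection coefficient is squeezed between `0` and `θ² ω / (2γ)`: the numerator vanishes to
second order at `ω = 0`, the denominator only to first order. -/

lemma one_sub_cos_le_sq_div_two (x : ℝ) : 1 - cos x ≤ x ^ 2 / 2 := by
  linarith [one_sub_sq_div_two_le_cos (x := x)]

lemma one_sub_exp_neg_pos {x : ℝ} (hx : 0 < x) : 0 < 1 - exp (-x) :=
  sub_pos.mpr (exp_lt_one_iff.mpr (neg_neg_of_pos hx))

lemma exp_neg_div_one_sub_exp_neg_le_inv {x : ℝ} (hx : 0 < x) :
    exp (-x) / (1 - exp (-x)) ≤ x⁻¹ := by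
  have hden := one_sub_exp_neg_pos hx
  have hkey : (x + 1) * exp (-x) ≤ 1 :=
    calc (x + 1) * exp (-x) ≤ exp x * exp (-x) := by gcongr; exact add_one_le_exp x
      _ = 1 := by rw [← exp_add, add_neg_cancel, exp_zero]
  rw [div_le_iff₀ hden, inv_mul_eq_div, le_div_iff₀ hx]
  linarith

section Deflection

variable {γ ω : ℝ} (θ : ℝ) (hγ : 0 < γ) (hω : 0 < ω)
include hγ hω

lemma deflection_nonneg :
    0 ≤ 2 * exp (-(2 * γ * ω)) * (1 - cos (ω * θ)) / (1 - exp (-(2 * γ * ω))) := by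
  have hden := one_sub_exp_neg_pos (by positivity : 0 < 2 * γ * ω)
  have hcos : 0 ≤ 1 - cos (ω * θ) := by linarith [cos_le_one (ω * θ)]
  positivity

lemma deflection_le :
    2 * exp (-(2 * γ * ω)) * (1 - cos (ω * θ)) / (1 - exp (-(2 * γ * ω))) ≤
      θ ^ 2 / (2 * γ) * ω := by
  have hden := one_sub_exp_neg_pos (by positivity : 0 < 2 * γ * ω)
  have hcos : 0 ≤ 2 * (1 - cos (ω * θ)) := by linarith [cos_le_one (ω * θ)]
  calc 2 * exp (-(2 * γ * ω)) * (1 - cos (ω * θ)) / (1 - exp (-(2 * γ * ω)))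
      = 2 * (1 - cos (ω * θ)) * (exp (-(2 * γ * ω)) / (1 - exp (-(2 * γ * ω)))) := by ring
    _ ≤ 2 * ((ω * θ) ^ 2 / 2) * (2 * γ * ω)⁻¹ := by
        gcongr
        · exact one_sub_cos_le_sq_div_two _
        · exact exp_neg_div_one_sub_exp_neg_le_inv (by positivity)
    _ = θ ^ 2 / (2 * γ) * ω := by field_simp

end Deflection

theorem stmt13_general (γ θ : ℝ) (hγ : 0 < γ)
    (D : ℝ → ℝ)
    (hD : ∀ ω, D ω = 2 * Real.exp (-(2 * γ * ω)) * (1 - Real.cos (ω * θ)) /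
        (1 - Real.exp (-(2 * γ * ω)))) :
    Filter.Tendsto D (nhdsWithin 0 (Ioi 0)) (nhds 0) := by
  have hlin : Tendsto (fun ω => θ ^ 2 / (2 * γ) * ω) (𝓝[>] 0) (𝓝 0) :=
    tendsto_nhdsWithin_of_tendsto_nhds ((continuous_const_mul _).tendsto' 0 0 (mul_zero _))
  refine squeeze_zero' ?_ ?_ hlin
  · filter_upwards [self_mem_nhdsWithin] with ω hω
    exact (hD ω).symm ▸ deflection_nonneg θ hγ hω
  · filter_upwards [self_mem_nhdsWithin] with ω hω
    exact (hD ω).symm ▸ deflection_le θ hγ hω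

theorem stmt13 (γ θ : ℝ) (hγ : 0 < γ) (hθ : 0 < θ)
    (D : ℝ → ℝ)
    (hD : ∀ ω, D ω = 2 * Real.exp (-(2 * γ * ω)) * (1 - Real.cos (ω * θ)) /
        (1 - Real.exp (-(2 * γ * ω)))) :
    Filter.Tendsto D (nhdsWithin 0 (Ioi 0)) (nhds 0) :=
  stmt13_general γ θ hγ D hD
end

section
/- Let n be a real random variable with real-valued characteristic function φ(ω) = E[cos(ωn)] (and E[sin(ωn)] = 0 for all ω), and let p ∈ ℝ, a ∈ ℝ. Then E[exp(p cos(ωn + a))] = I₀(p) + 2 ∑_{k=1}^{∞} I_k(p) φ(kω) cos(ka), where I_k is the modified Bessel function of the first kind. -/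
/-!
The Jacobi–Anger expansion: `t ↦ e^{p cos t}` is smooth and `2π`-periodic, so two integrations by
parts make its Fourier coefficients `O(1/n²)`; the Fourier series is then absolutely summable and
converges pointwise. Since the function is even, its `n`-th coefficient is `I_{|n|}(p)`, and pairing
the terms `±n` gives `e^{p cos u} = I₀(p) + 2 ∑_{k ≥ 1} I_k(p) cos (k u)`.

Put `u = ω x + a` and integrate against `μ` term by term, the series being dominated by
`2 ∑ |I_k(p)| < ∞`. Since `E[sin (c x)] = 0`, `E[cos (c x + d)] = φ(c) cos d`.
-/

open Real MeasureTheory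

/-- Modified Bessel function of the first kind of integer order `k`,
via the integral representation `I_k(p) = (1/π) ∫₀^π e^{p cos θ} cos(kθ) dθ`. -/
noncomputable def besselI (k : ℕ) (p : ℝ) : ℝ :=
  (1 / π) * ∫ t in (0:ℝ)..π, Real.exp (p * Real.cos t) * Real.cos (k * t)

open Function Set

section FourierCoeffOn

variable {a b : ℝ} (hab : a < b)

theorem norm_fourierCoeffOn_le {E : Type*} [NormedAddCommGroup E] [NormedSpace ℂ E]
    {f : ℝ → E} {C : ℝ} (hf : ∀ x ∈ Ioc a b, ‖f x‖ ≤ C) (n : ℤ) :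
    ‖fourierCoeffOn hab f n‖ ≤ C := by
  have hba : 0 < b - a := sub_pos.mpr hab
  rw [fourierCoeffOn_eq_integral, norm_smul, Real.norm_of_nonneg (by positivity)]
  have hint : ‖∫ x in a..b, fourier (-n) (x : AddCircle (b - a)) • f x‖ ≤ C * |b - a| := by
    refine intervalIntegral.norm_integral_le_of_norm_le_const fun x hx => ?_
    rw [norm_smul, show ‖fourier (-n) (x : AddCircle (b - a))‖ = 1 from Circle.norm_coe _, one_mul]
    exact hf x (by rwa [uIoc_of_le hab.le] at hx)
  calc 1 / (b - a) * ‖∫ x in a..b, fourier (-n) (x : AddCircle (b - a)) • f x‖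
      ≤ 1 / (b - a) * (C * |b - a|) := by gcongr
    _ = C := by rw [abs_of_pos hba]; field_simp

theorem fourierCoeffOn_eq_of_hasDerivAt {f f' : ℝ → ℂ} {n : ℤ} (hn : n ≠ 0)
    (hf : ∀ x ∈ uIcc a b, HasDerivAt f (f' x) x) (hf' : IntervalIntegrable f' volume a b)
    (hfab : f b = f a) :
    fourierCoeffOn hab f n = (b - a) / (2 * π * Complex.I * n) * fourierCoeffOn hab f' n := by
  rw [fourierCoeffOn_of_hasDerivAt hab hn hf hf', hfab]
  have : (n : ℂ) ≠ 0 := by exact_mod_cast hn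
  field_simp
  ring

theorem summable_fourierCoeffOn_of_hasDerivAt_two {f f' f'' : ℝ → ℂ}
    (hf : ∀ x ∈ uIcc a b, HasDerivAt f (f' x) x) (hf' : ∀ x ∈ uIcc a b, HasDerivAt f' (f'' x) x)
    (hf'' : ContinuousOn f'' (uIcc a b)) (hfab : f b = f a) (hf'ab : f' b = f' a) :
    Summable (fourierCoeffOn hab f) := by
  obtain ⟨C, hC⟩ := isCompact_uIcc.exists_bound_of_continuousOn hf''
  have hf'_int : IntervalIntegrable f' volume a b :=
    ContinuousOn.intervalIntegrable fun x hx => (hf' x hx).continuousAt.continuousWithinAt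
  have hdecay : ∀ n : ℤ, n ≠ 0 →
      ‖fourierCoeffOn hab f n‖ ≤ ((b - a) / (2 * π)) ^ 2 * C * (1 / (n : ℝ) ^ 2) := by
    intro n hn
    rw [fourierCoeffOn_eq_of_hasDerivAt hab hn hf hf'_int hfab,
      fourierCoeffOn_eq_of_hasDerivAt hab hn hf' (hf''.intervalIntegrable) hf'ab, ← mul_assoc,
      norm_mul]
    have hcoeff : ‖(b - a) / (2 * π * Complex.I * n) * ((b - a) / (2 * π * Complex.I * n))‖
        = ((b - a) / (2 * π)) ^ 2 * (1 / (n : ℝ) ^ 2) := by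
      have : (n : ℝ) ≠ 0 := by exact_mod_cast hn
      simp only [← Complex.ofReal_sub, norm_mul, norm_div, Complex.norm_real, Complex.norm_I,
        Complex.norm_intCast, Complex.norm_ofNat, Real.norm_eq_abs, abs_of_pos (sub_pos.mpr hab),
        abs_of_pos pi_pos]
      field_simp
      rw [sq_abs]
    rw [hcoeff, mul_right_comm]
    gcongr
    refine norm_fourierCoeffOn_le hab (fun x hx => hC x ?_) n
    rw [uIcc_of_le hab.le]
    exact Ioc_subset_Icc_self hx
  refine .of_norm_bounded_eventually ((summable_one_div_int_pow.mpr one_lt_two).mul_left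
    (((b - a) / (2 * π)) ^ 2 * C)) ?_
  filter_upwards [Filter.eventually_cofinite_ne 0] with n hn using hdecay n hn

end FourierCoeffOn

theorem AddCircle.liftIoc_coe_apply_of_periodic {B : Type*} {T : ℝ} [Fact (0 < T)] (a : ℝ)
    {f : ℝ → B} (hf : Periodic f T) (x : ℝ) : AddCircle.liftIoc T a f x = f x := by
  change f (AddCircle.equivIoc T a x) = f x
  rw [← hf.lift_coe, ← hf.lift_coe x, AddCircle.coe_equivIoc]

theorem hasSum_fourierCoeffOn_smul_fourier {a b : ℝ} (hab : a < b) {f : ℝ → ℂ}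
    (hf : Continuous f) (hper : Periodic f (b - a)) (hsum : Summable (fourierCoeffOn hab f))
    (x : ℝ) :
    HasSum (fun n => fourierCoeffOn hab f n • fourier n (x : AddCircle (b - a))) (f x) := by
  have : Fact (0 < b - a) := ⟨sub_pos.mpr hab⟩
  let F : C(AddCircle (b - a), ℂ) :=
    ⟨AddCircle.liftIoc (b - a) a f, AddCircle.liftIoc_continuous (hper a).symm
      hf.continuousOn⟩
  have := has_pointwise_sum_fourier_series_of_summable (f := F) hsum x
  rwa [show F x = f x from AddCircle.liftIoc_coe_apply_of_periodic a hper x] at this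

theorem intervalIntegral.integral_neg_self_eq_integral_add_comp_neg {E : Type*}
    [NormedAddCommGroup E] [NormedSpace ℝ E] {f : ℝ → E} {a : ℝ}
    (hf : IntervalIntegrable f volume (-a) a) :
    ∫ x in -a..a, f x = ∫ x in 0..a, (f x + f (-x)) := by
  have h0 : (0 : ℝ) ∈ uIcc (-a) a := by rw [mem_uIcc]; grind
  have h₁ : IntervalIntegrable f volume (-a) 0 := hf.mono_set (uIcc_subset_uIcc_left h0)
  have h₂ : IntervalIntegrable f volume 0 a := hf.mono_set (uIcc_subset_uIcc_right h0)
  have h₁' : IntervalIntegrable (fun x => f (-x)) volume 0 a := by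
    simpa using ((IntervalIntegrable.iff_comp_neg (by simp)).mp h₁).symm
  rw [← integral_add_adjacent_intervals h₁ h₂, integral_add h₂ h₁',
    integral_comp_neg, neg_zero, add_comm]

theorem Real.cos_natAbs_mul (n : ℤ) (x : ℝ) : cos (n.natAbs * x) = cos (n * x) := by
  rcases Int.natAbs_eq n with h | h <;> nth_rewrite 2 [h] <;> simp

theorem fourier_add_fourier_neg_coe_eq_two_mul_cos (n : ℤ) (x : ℝ) :
    fourier n (x : AddCircle (π - -π)) + fourier (-n) (x : AddCircle (π - -π))
      = 2 * cos (n * x) := by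
  have harg : ∀ m : ℤ, 2 * π * Complex.I * m * x / ((π - -π : ℝ) : ℂ)
      = ((m * x : ℝ) : ℂ) * Complex.I := by
    intro m
    have : (π : ℂ) ≠ 0 := by exact_mod_cast pi_ne_zero
    push_cast
    field_simp
    ring
  rw [fourier_coe_apply, fourier_coe_apply, harg, harg, Complex.ofReal_cos, Complex.two_cos]
  push_cast
  ring_nf

theorem fourierCoeffOn_exp_mul_cos (p : ℝ) (n : ℤ) :
    fourierCoeffOn (neg_lt_self pi_pos) (fun t => (exp (p * cos t) : ℂ)) n
      = besselI n.natAbs p := by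
  rw [fourierCoeffOn_eq_integral, intervalIntegral.integral_neg_self_eq_integral_add_comp_neg
    (Continuous.intervalIntegrable (by fun_prop) _ _)]
  have hsymm : ∀ x : ℝ,
      fourier (-n) ((-x : ℝ) : AddCircle (π - -π)) = fourier n (x : AddCircle (π - -π)) := by
    simp
  simp only [smul_eq_mul, cos_neg, hsymm, ← add_mul, add_comm (fourier (-n) _),
    fourier_add_fourier_neg_coe_eq_two_mul_cos, ← cos_natAbs_mul n]
  norm_cast
  rw [intervalIntegral.integral_ofReal, besselI, Complex.real_smul]
  simp only [mul_assoc, mul_comm (cos _), intervalIntegral.integral_const_mul]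
  push_cast
  field_simp
  ring

theorem hasDerivAt_exp_mul_cos (p t : ℝ) :
    HasDerivAt (fun t => exp (p * cos t)) (-p * sin t * exp (p * cos t)) t :=
  ((hasDerivAt_cos t).const_mul p).exp.congr_deriv (by ring)

theorem hasDerivAt_neg_mul_sin_mul_exp_mul_cos (p t : ℝ) :
    HasDerivAt (fun t => -p * sin t * exp (p * cos t))
      ((p ^ 2 * sin t ^ 2 - p * cos t) * exp (p * cos t)) t :=
  (((hasDerivAt_sin t).const_mul (-p)).mul (hasDerivAt_exp_mul_cos p t)).congr_deriv (by ring)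

theorem summable_fourierCoeffOn_exp_mul_cos (p : ℝ) :
    Summable (fourierCoeffOn (neg_lt_self pi_pos) (fun t => (exp (p * cos t) : ℂ))) :=
  summable_fourierCoeffOn_of_hasDerivAt_two (neg_lt_self pi_pos)
    (fun t _ => (hasDerivAt_exp_mul_cos p t).ofReal_comp)
    (fun t _ => (hasDerivAt_neg_mul_sin_mul_exp_mul_cos p t).ofReal_comp)
    (by fun_prop) (by simp) (by simp)

theorem summable_abs_besselI (p : ℝ) : Summable fun k : ℕ => |besselI k p| := by
  have h := (summable_fourierCoeffOn_exp_mul_cos p).norm.comp_injective Nat.cast_injective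
  simpa only [comp_def, fourierCoeffOn_exp_mul_cos, Int.natAbs_natCast, Complex.norm_real,
    Real.norm_eq_abs] using h

theorem hasSum_besselI_mul_cos (p u : ℝ) :
    HasSum (fun k : ℕ => 2 * besselI (k + 1) p * cos ((k + 1) * u))
      (exp (p * cos u) - besselI 0 p) := by
  have hper : Periodic (fun t => (exp (p * cos t) : ℂ)) (π - -π) := fun t => by
    simp [show π - -π = 2 * π by ring]
  have h := (hasSum_fourierCoeffOn_smul_fourier (neg_lt_self pi_pos) (by fun_prop) hper
    (summable_fourierCoeffOn_exp_mul_cos p) u).nat_add_neg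
  simp only [fourierCoeffOn_exp_mul_cos, Int.natAbs_neg, Int.natAbs_natCast, smul_eq_mul,
    ← mul_add, fourier_add_fourier_neg_coe_eq_two_mul_cos] at h
  rw [← hasSum_nat_add_iff' 1] at h
  have hterm : ∀ k : ℕ, (besselI (k + 1) p : ℂ) * (2 * cos (((k + 1 : ℕ) : ℤ) * u))
      = ((2 * besselI (k + 1) p * cos ((k + 1) * u) : ℝ) : ℂ) := by
    intro k
    push_cast
    ring
  have hvalue :
      (exp (p * cos u) : ℂ) + besselI (Int.natAbs 0) p * fourier 0 (u : AddCircle (π - -π))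
      - ∑ i ∈ Finset.range 1, (besselI i p : ℂ) * (2 * cos ((i : ℤ) * u))
      = ((exp (p * cos u) - besselI 0 p : ℝ) : ℂ) := by
    rw [Finset.sum_range_one, fourier_zero, Int.natAbs_zero, Nat.cast_zero, Int.cast_zero, zero_mul,
      cos_zero]
    push_cast
    ring
  rwa [funext hterm, hvalue, Complex.hasSum_ofReal] at h

theorem hasSum_integral_mul_of_summable_abs {α : Type*} [MeasurableSpace α] {μ : Measure α}
    [IsFiniteMeasure μ] {c : ℕ → ℝ} {g : ℕ → α → ℝ} {F : α → ℝ} (hc : Summable fun k => |c k|)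
    (hg_meas : ∀ k, AEStronglyMeasurable (g k) μ) (hg_le : ∀ k x, |g k x| ≤ 1)
    (hF : ∀ x, HasSum (fun k => c k * g k x) (F x)) :
    HasSum (fun k => c k * ∫ x, g k x ∂μ) (∫ x, F x ∂μ) := by
  simp only [← integral_const_mul]
  refine hasSum_integral_of_dominated_convergence (fun k _ => |c k|)
    (fun k => (hg_meas k).const_mul (c k)) (fun k => ae_of_all _ fun x => ?_)
    (ae_of_all _ fun _ => hc) (integrable_const _) (ae_of_all _ hF)
  rw [Real.norm_eq_abs, abs_mul]
  exact mul_le_of_le_one_right (abs_nonneg _) (hg_le k x)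

theorem integral_cos_mul_add {μ : Measure ℝ} [IsFiniteMeasure μ] {c : ℝ}
    (hsin : ∫ x, sin (c * x) ∂μ = 0) (d : ℝ) :
    ∫ x, cos (c * x + d) ∂μ = (∫ x, cos (c * x) ∂μ) * cos d := by
  have hcos : Integrable (fun x => cos (c * x) * cos d) μ :=
    (Integrable.of_bound (by fun_prop) 1 (ae_of_all _ fun x => abs_cos_le_one _)).mul_const _
  have hsin' : Integrable (fun x => sin (c * x) * sin d) μ :=
    (Integrable.of_bound (by fun_prop) 1 (ae_of_all _ fun x => abs_sin_le_one _)).mul_const _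
  simp only [cos_add]
  rw [integral_sub hcos hsin', integral_mul_const, integral_mul_const, hsin, zero_mul, sub_zero]

theorem stmt15 (μ : Measure ℝ) [IsProbabilityMeasure μ]
    (φ : ℝ → ℝ)
    (hφ : ∀ ω, φ ω = ∫ x, Real.cos (ω * x) ∂μ)
    (hreal : ∀ ω, (∫ x, Real.sin (ω * x) ∂μ) = 0)
    (p a ω : ℝ) :
    HasSum (fun k : ℕ => 2 * besselI (k + 1) p * φ ((k + 1) * ω) * Real.cos ((k + 1) * a))
      ((∫ x, Real.exp (p * Real.cos (ω * x + a)) ∂μ) - besselI 0 p) := by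
  have hcoeff : Summable fun k : ℕ => |2 * besselI (k + 1) p| := by
    simpa [abs_mul] using ((summable_nat_add_iff 1).mpr (summable_abs_besselI p)).mul_left 2
  have hexp : Integrable (fun x => exp (p * cos (ω * x + a))) μ := by
    refine Integrable.of_bound (by fun_prop) (exp |p|) (ae_of_all _ fun x => ?_)
    rw [Real.norm_of_nonneg (exp_pos _).le, exp_le_exp]
    calc p * cos (ω * x + a) ≤ |p| * |cos (ω * x + a)| := abs_mul p _ ▸ le_abs_self _
      _ ≤ |p| := mul_le_of_le_one_right (abs_nonneg p) (abs_cos_le_one _)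
  have hmoment : ∀ k : ℕ, ∫ x, cos ((k + 1) * (ω * x + a)) ∂μ
      = φ ((k + 1) * ω) * cos ((k + 1) * a) := fun k => by
    simp only [mul_add, ← mul_assoc]
    rw [integral_cos_mul_add (hreal _), hφ]
  have h := hasSum_integral_mul_of_summable_abs (μ := μ) hcoeff
    (fun k => by fun_prop) (fun k x => abs_cos_le_one _)
    (fun x => hasSum_besselI_mul_cos p (ω * x + a))
  rw [integral_sub hexp (integrable_const _), integral_const, probReal_univ, one_smul] at h
  simpa only [hmoment, mul_assoc] using h
end

section
/- Let φ be a real-valued characteristic function with 0 ≤ φ(ω) ≤ 1, let E[|h|²] = 1 for a nonconstant nonnegative random variable |h|, c > 0, and θ, ω > 0. Then the faded deflection coefficient D_f(ω) = 2(E|h|)² φ(ω)²(1−cos(ωθ)) / (1 − (E|h|)² φ(ω)² + c) satisfies D_f(ω) < D(ω) := 2 φ(ω)²(1−cos(ωθ)) / (1 − φ(ω)² + c) whenever φ(ω)(1−cos(ωθ)) > 0, because (E|h|)² < 1 by Jensen's inequality (with equality iff |h| is deterministic). -/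
open Real MeasureTheory ProbabilityTheory

/-! Both claims come from strict Jensen: a non-constant square-integrable `X` has positive
variance, so `(E X)² < E X² = 1`. The fading factor therefore shrinks `φ²` strictly, and the
deflection coefficient is `2 (1 - cos ωθ) · t / (1 + c - t)` at `t = (E|h|)² φ²` resp. `t = φ²`,
strictly increasing in `t` below `1 + c`. -/

theorem sq_integral_lt_integral_sq {Ω : Type*} [MeasurableSpace Ω] {μ : Measure Ω}
    [IsProbabilityMeasure μ] {X : Ω → ℝ} (hX : MemLp X 2 μ) (hX_ne : ¬ ∀ᵐ ω ∂μ, X ω = μ[X]) :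
    μ[X] ^ 2 < ∫ ω, X ω ^ 2 ∂μ := by
  have hvar : 0 < Var[X; μ] :=
    (variance_nonneg X μ).lt_of_ne fun h0 => hX_ne (ae_eq_integral_of_variance_eq_zero hX h0.symm)
  rw [variance_eq_sub hX] at hvar
  simpa using hvar

theorem stmt17_general {Ω : Type*} [MeasurableSpace Ω] (P : Measure Ω) [IsProbabilityMeasure P]
    (h : Ω → ℝ)
    (hL2 : MemLp h 2 P)
    (hnorm : (∫ x, (h x)^2 ∂P) = 1)
    (hnonconst : ¬ (∀ᵐ x ∂P, h x = ∫ y, h y ∂P))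
    (φ : ℝ → ℝ) (hφrange : ∀ ω, φ ω ∈ Set.Icc (0:ℝ) 1)
    (c θ ω : ℝ) (hc : 0 < c)
    (hpos : 0 < φ ω * (1 - Real.cos (ω * θ))) :
    (∫ x, h x ∂P)^2 < 1 ∧
    2 * (∫ x, h x ∂P)^2 * (φ ω)^2 * (1 - Real.cos (ω * θ)) /
        (1 - (∫ x, h x ∂P)^2 * (φ ω)^2 + c) <
      2 * (φ ω)^2 * (1 - Real.cos (ω * θ)) / (1 - (φ ω)^2 + c) := by
  set m := ∫ x, h x ∂P
  set k := 1 - Real.cos (ω * θ)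
  have hm : m ^ 2 < 1 := hnorm ▸ sq_integral_lt_integral_sq hL2 hnonconst
  obtain ⟨hφ0, hφ1⟩ := hφrange ω
  have hk : 0 < k := pos_of_mul_pos_right hpos hφ0
  have hφ : 0 < φ ω ^ 2 := pow_pos (pos_of_mul_pos_left hpos hk.le) 2
  have hφ_lt : φ ω ^ 2 < 1 + c := by nlinarith
  have hfaded : m ^ 2 * φ ω ^ 2 < φ ω ^ 2 := mul_lt_of_lt_one_left hφ hm
  refine ⟨hm, ?_⟩
  calc 2 * m ^ 2 * φ ω ^ 2 * k / (1 - m ^ 2 * φ ω ^ 2 + c)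
      = 2 * k * ((m ^ 2 * φ ω ^ 2) / (1 + c - m ^ 2 * φ ω ^ 2)) := by ring
    _ < 2 * k * (φ ω ^ 2 / (1 + c - φ ω ^ 2)) := by gcongr
    _ = 2 * φ ω ^ 2 * k / (1 - φ ω ^ 2 + c) := by ring

theorem stmt17 {Ω : Type*} [MeasurableSpace Ω] (P : Measure Ω) [IsProbabilityMeasure P]
    (h : Ω → ℝ) (hmeas : Measurable h) (hnonneg : ∀ x, 0 ≤ h x)
    (hL2 : MemLp h 2 P)
    (hnorm : (∫ x, (h x)^2 ∂P) = 1)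
    (hnonconst : ¬ (∀ᵐ x ∂P, h x = ∫ y, h y ∂P))
    (φ : ℝ → ℝ) (hφrange : ∀ ω, φ ω ∈ Set.Icc (0:ℝ) 1)
    (c θ ω : ℝ) (hc : 0 < c) (hθ : 0 < θ) (hω : 0 < ω)
    (hpos : 0 < φ ω * (1 - Real.cos (ω * θ))) :
    (∫ x, h x ∂P)^2 < 1 ∧
    2 * (∫ x, h x ∂P)^2 * (φ ω)^2 * (1 - Real.cos (ω * θ)) /
        (1 - (∫ x, h x ∂P)^2 * (φ ω)^2 + c) <
      2 * (φ ω)^2 * (1 - Real.cos (ω * θ)) / (1 - (φ ω)^2 + c) :=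
  stmt17_general P h hL2 hnorm hnonconst φ hφrange c θ ω hc hpos
end
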